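/- arXiv:math/0311204 — 8 statements merged into one kernel-verified Lean document; each statement's English description precedes it below -/
import Mathlib

section
/- If A₁, A₂, A₃ satisfy the color Heisenberg relations and A₃² = α²·1 for some nonzero scalar α, then A₁ and (α⁻¹A₂)(α⁻¹A₃) satisfy the Heisenberg canonical commutation relation: A₁·(α⁻²A₂A₃) − (α⁻²A₂A₃)·A₁ = 1. -/
theorem mul_mul_sub_mul_mul_of_anticommute {R : Type*} [Ring R] {a c : R}
    (hac : a * c + c * a = 0) (b : R) :
    a * (b * c) - b * c * a = (a * b + b * a) * c := by
  rw [← eq_sub_iff_add_eq', zero_sub] at hac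
  rw [mul_assoc b, hac, mul_neg, sub_neg_eq_add, add_mul, mul_assoc, mul_assoc]

theorem colorHeis_to_Heisenberg_general {R : Type*} [Ring R] [Algebra ℂ R]
    (A₁ A₂ A₃ : R) (α : ℂ) (hα : α ≠ 0)
    (h1 : A₁ * A₂ + A₂ * A₁ = A₃)
    (h2 : A₁ * A₃ + A₃ * A₁ = 0)
    (hsq : A₃ ^ 2 = (α ^ 2) • (1 : R)) :
    A₁ * ((α⁻¹ • A₂) * (α⁻¹ • A₃)) - ((α⁻¹ • A₂) * (α⁻¹ • A₃)) * A₁ = 1 := by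
  have hcomm : A₁ * (A₂ * A₃) - A₂ * A₃ * A₁ = α ^ 2 • (1 : R) := by
    rw [mul_mul_sub_mul_mul_of_anticommute h2, h1, ← sq, hsq]
  have hscalar : α⁻¹ * α⁻¹ * α ^ 2 = 1 := by field_simp
  rw [smul_mul_smul_comm, mul_smul_comm, smul_mul_assoc, ← smul_sub, hcomm, smul_smul,
    hscalar, one_smul]

theorem colorHeis_to_Heisenberg {R : Type*} [Ring R] [Algebra ℂ R]
    (A₁ A₂ A₃ : R) (α : ℂ) (hα : α ≠ 0)
    (h1 : A₁ * A₂ + A₂ * A₁ = A₃)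
    (h2 : A₁ * A₃ + A₃ * A₁ = 0)
    (h3 : A₂ * A₃ + A₃ * A₂ = 0)
    (hsq : A₃ ^ 2 = (α ^ 2) • (1 : R)) :
    A₁ * ((α⁻¹ • A₂) * (α⁻¹ • A₃)) - ((α⁻¹ • A₂) * (α⁻¹ • A₃)) * A₁ = 1 :=
  colorHeis_to_Heisenberg_general A₁ A₂ A₃ α hα h1 h2 hsq
end

section
/- If A and B satisfy AB − BA = 1, then for all nonnegative integers i, j: Aⁱ·Bʲ = Σ_{ν=0}^{min(i,j)} ν!·C(i,ν)·C(j,ν)·B^{j−ν}·A^{i−ν}. -/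
private lemma weyl_key {R : Type*} [Ring R] (A B : R) (h : A * B = B * A + 1) :
    ∀ m : ℕ, A * B ^ m = B ^ m * A + m • B ^ (m - 1) := by
  intro m
  induction m with
  | zero => simp
  | succ n ih =>
    rw [pow_succ, ← mul_assoc, ih, add_mul, mul_assoc, h, mul_add, mul_one]
    cases n with
    | zero => simp [pow_succ]
    | succ k =>
      rw [smul_mul_assoc, Nat.succ_sub_one, Nat.succ_sub_one, ← pow_succ, ← mul_assoc]
      conv_rhs => rw [succ_nsmul]
      abel

private lemma weyl_coeff (i j ν : ℕ) :
    (ν + 1).factorial * i.choose (ν + 1) * j.choose (ν + 1)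
      + ν.factorial * i.choose ν * j.choose ν * (j - ν)
    = (ν + 1).factorial * (i + 1).choose (ν + 1) * j.choose (ν + 1) := by
  have h1 : j.choose (ν + 1) * (ν + 1) = j.choose ν * (j - ν) :=
    Nat.choose_succ_right_eq j ν
  have h2 : (i + 1).choose (ν + 1) = i.choose ν + i.choose (ν + 1) :=
    Nat.choose_succ_succ i ν
  have h3 : (ν + 1).factorial = (ν + 1) * ν.factorial := Nat.factorial_succ ν
  rw [h2, h3, mul_assoc (ν.factorial * i.choose ν) (j.choose ν) (j - ν), ← h1]
  ring

private lemma weyl_aux {R : Type*} [Ring R] (A B : R) (h : A * B = B * A + 1) (j : ℕ) :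
    ∀ i : ℕ, A ^ i * B ^ j
      = ∑ ν ∈ Finset.range (j + 1),
          (Nat.factorial ν * Nat.choose i ν * Nat.choose j ν) • (B ^ (j - ν) * A ^ (i - ν)) := by
  intro i
  induction i with
  | zero =>
    rw [Finset.sum_eq_single 0]
    · simp
    · intro ν _ hν
      have : (0 : ℕ) < ν := Nat.pos_of_ne_zero hν
      simp [Nat.choose_eq_zero_of_lt this]
    · intro habs
      exact absurd (Finset.mem_range.mpr (by omega)) habs
  | succ i ih =>
    have step : A ^ (i + 1) * B ^ j = A * (A ^ i * B ^ j) := by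
      rw [pow_succ', mul_assoc]
    rw [step, ih, Finset.mul_sum]
    have expand : ∀ ν ∈ Finset.range (j + 1),
        A * ((Nat.factorial ν * Nat.choose i ν * Nat.choose j ν) •
            (B ^ (j - ν) * A ^ (i - ν)))
        = (Nat.factorial ν * Nat.choose i ν * Nat.choose j ν) •
            (B ^ (j - ν) * (A ^ (i - ν) * A))
          + (Nat.factorial ν * Nat.choose i ν * Nat.choose j ν * (j - ν)) •
            (B ^ (j - ν - 1) * A ^ (i - ν)) := by
      intro ν _
      rw [mul_smul_comm, ← mul_assoc, weyl_key A B h (j - ν), add_mul, smul_add,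
        smul_mul_assoc, smul_smul]
      congr 1
      rw [mul_assoc, mul_assoc, ← pow_succ', ← pow_succ]
    rw [Finset.sum_congr rfl expand, Finset.sum_add_distrib]
    -- peel the last (zero) term of the second sum
    have S2 : (∑ ν ∈ Finset.range (j + 1),
        (Nat.factorial ν * Nat.choose i ν * Nat.choose j ν * (j - ν)) •
          (B ^ (j - ν - 1) * A ^ (i - ν)))
        = ∑ ν ∈ Finset.range j,
        (Nat.factorial ν * Nat.choose i ν * Nat.choose j ν * (j - ν)) •
          (B ^ (j - ν - 1) * A ^ (i - ν)) := by
      rw [Finset.sum_range_succ]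
      simp
    rw [S2]
    -- peel the first term of the first sum and of the RHS sum
    rw [Finset.sum_range_succ' (fun ν => (Nat.factorial ν * Nat.choose i ν * Nat.choose j ν) •
          (B ^ (j - ν) * (A ^ (i - ν) * A)))]
    rw [Finset.sum_range_succ' (fun ν =>
          (Nat.factorial ν * Nat.choose (i+1) ν * Nat.choose j ν) •
          (B ^ (j - ν) * A ^ (i + 1 - ν)))]
    have first0 : (Nat.factorial 0 * Nat.choose i 0 * Nat.choose j 0) •
          (B ^ (j - 0) * (A ^ (i - 0) * A))
        = (Nat.factorial 0 * Nat.choose (i+1) 0 * Nat.choose j 0) •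
          (B ^ (j - 0) * A ^ (i + 1 - 0)) := by
      simp [pow_succ]
    rw [add_right_comm, first0, ← Finset.sum_add_distrib]
    congr 1
    apply Finset.sum_congr rfl
    intro ν hν
    have hνj : ν < j := Finset.mem_range.mp hν
    by_cases hi : ν < i
    · have e1 : i - (ν + 1) + 1 = i - ν := by omega
      have e2 : i + 1 - (ν + 1) = i - ν := by omega
      have e3 : j - ν - 1 = j - (ν + 1) := by omega
      rw [← pow_succ, e1, e2, e3, ← add_smul, weyl_coeff]
    · have hiν : i ≤ ν := by omega
      have hz : i.choose (ν + 1) = 0 := Nat.choose_eq_zero_of_lt (by omega)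
      have e2 : i + 1 - (ν + 1) = i - ν := by omega
      have e3 : j - ν - 1 = j - (ν + 1) := by omega
      have hc : Nat.factorial ν * Nat.choose i ν * Nat.choose j ν * (j - ν)
          = Nat.factorial (ν+1) * Nat.choose (i+1) (ν+1) * Nat.choose j (ν+1) := by
        have := weyl_coeff i j ν
        rw [hz] at this
        simpa using this
      rw [hz, e2, e3, hc]
      simp

theorem heisenberg_reorder_general {R : Type*} [Ring R] [Algebra ℂ R]
    (A B : R) (h : A * B - B * A = 1) (i j : ℕ) :
    A ^ i * B ^ j
      = ∑ ν ∈ Finset.range (min i j + 1),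
          (Nat.factorial ν * Nat.choose i ν * Nat.choose j ν) • (B ^ (j - ν) * A ^ (i - ν)) := by
  have h' : A * B = B * A + 1 := by
    have h2 := sub_eq_iff_eq_add.mp h
    rwa [add_comm] at h2
  rw [weyl_aux A B h' j i]
  refine (Finset.sum_subset ?_ ?_).symm
  · exact Finset.range_subset_range.mpr (by omega)
  · intro ν hν hν'
    have h1 : ν < j + 1 := Finset.mem_range.mp hν
    have h2 : ¬ ν < min i j + 1 := fun hc => hν' (Finset.mem_range.mpr hc)
    have : i < ν := by omega
    simp [Nat.choose_eq_zero_of_lt this]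
end

section
/- Let A₁ = A and suppose A₂ is a polynomial in the Heisenberg generators A, B (i.e. A₂ lies in the subalgebra generated by A and B of the Heisenberg algebra ℂ⟨A,B⟩/⟨AB−BA−1⟩). If A₂A² + 2A·A₂·A + A²A₂ = 0, then A₂ = 0. Consequently the relations A₁A₂ + A₂A₁ = A₃ and A₁A₃ + A₃A₁ = 0 with A₁ = A force A₂ = A₃ = 0 for polynomial A₂, A₃. -/
/-! On the ordered monomials, `X ↦ AX + XA` acts by `BʲAᵏ ↦ 2BʲAᵏ⁺¹ + jBʲ⁻¹Aᵏ`. For a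
monomial `BʲAᵏ` of maximal total degree in the support of `X`, the coefficient of `BʲAᵏ⁺¹` in
`AX + XA` is twice that of `BʲAᵏ` in `X`, so this operator is injective on polynomials in `A, B`.
The hypothesis `A₂A² + 2A·A₂·A + A²A₂ = 0` says that it kills `A₂` after being applied twice. -/

open Finsupp

namespace Heisenberg

section Coefficients

variable (K : Type*) [CommRing K]

-- `p.1 - 1` truncates at `p.1 = 0`, where its coefficient `p.1` vanishes anyway.
noncomputable def anticommCoeff : ((ℕ × ℕ) →₀ K) →ₗ[K] ((ℕ × ℕ) →₀ K) :=
  Finsupp.lsum K fun p => LinearMap.toSpanSingleton K _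
    (single (p.1, p.2 + 1) 2 + single (p.1 - 1, p.2) (p.1 : K))

variable {K}

lemma anticommCoeff_single (p : ℕ × ℕ) (a : K) :
    anticommCoeff K (single p a) =
      a • (single (p.1, p.2 + 1) 2 + single (p.1 - 1, p.2) (p.1 : K)) := by
  simp [anticommCoeff]

lemma anticommCoeff_apply_succ (c : (ℕ × ℕ) →₀ K) (a b : ℕ) :
    anticommCoeff K c (a, b + 1) = 2 * c (a, b) + (a + 1) * c (a + 1, b + 1) := by
  induction c using Finsupp.induction_linear with
  | zero => simp
  | add f g hf hg => simp only [map_add, Finsupp.add_apply, hf, hg]; ring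
  | single p α =>
    obtain ⟨x, y⟩ := p
    rw [anticommCoeff_single]
    simp only [Finsupp.smul_apply, Finsupp.add_apply, single_apply, Prod.mk.injEq, smul_eq_mul]
    split_ifs <;> simp_all [mul_comm]
    obtain rfl : x = 0 := by omega
    simp

lemma anticommCoeff_injective [NoZeroDivisors K] [NeZero (2 : K)] :
    Function.Injective (anticommCoeff K) := by
  refine (injective_iff_map_eq_zero _).mpr fun c hc => ?_
  by_contra hne
  obtain ⟨p, hp, hmax⟩ := c.support.exists_max_image (fun q => q.1 + q.2)
    (Finsupp.support_nonempty_iff.mpr hne)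
  have hnext : c (p.1 + 1, p.2 + 1) = 0 :=
    Finsupp.notMem_support_iff.mp fun h => by have := hmax _ h; simp at this; omega
  have := anticommCoeff_apply_succ c p.1 p.2
  rw [hc, hnext, mul_zero, add_zero, Finsupp.zero_apply, eq_comm, mul_eq_zero] at this
  exact this.elim two_ne_zero (Finsupp.mem_support_iff.mp hp)

end Coefficients

section Algebra

variable {K R : Type*} [CommRing K] [Ring R] [Algebra K R] {A B : R}

def orderedMonomial (A B : R) (p : ℕ × ℕ) : R := B ^ p.1 * A ^ p.2

lemma mul_pow_eq_pow_mul_add (hH : A * B - B * A = 1) (j : ℕ) :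
    A * B ^ j = B ^ j * A + j • B ^ (j - 1) := by
  have hAB : A * B = B * A + 1 := by rw [← hH, add_sub_cancel]
  induction j with
  | zero => simp
  | succ j ih =>
    rw [pow_succ, ← mul_assoc, ih, add_mul, mul_assoc, hAB, smul_mul_assoc]
    cases j with
    | zero => simp
    | succ m =>
      simp only [Nat.add_sub_cancel, ← pow_succ, mul_add, mul_one, ← mul_assoc, succ_nsmul]
      abel

lemma mul_orderedMonomial (hH : A * B - B * A = 1) (p : ℕ × ℕ) :
    A * orderedMonomial A B p =
      orderedMonomial A B (p.1, p.2 + 1) + p.1 • orderedMonomial A B (p.1 - 1, p.2) := by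
  simp only [orderedMonomial, ← mul_assoc, mul_pow_eq_pow_mul_add hH, add_mul, smul_mul_assoc,
    pow_succ']

lemma anticomm_linearCombination (hH : A * B - B * A = 1) (c : (ℕ × ℕ) →₀ K) :
    A * linearCombination K (orderedMonomial A B) c +
        linearCombination K (orderedMonomial A B) c * A =
      linearCombination K (orderedMonomial A B) (anticommCoeff K c) := by
  induction c using Finsupp.induction_linear with
  | zero => simp
  | add f g hf hg => rw [map_add, map_add, map_add, ← hf, ← hg]; noncomm_ring
  | single p a =>
    have hright : orderedMonomial A B p * A = orderedMonomial A B (p.1, p.2 + 1) := by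
      simp only [orderedMonomial, mul_assoc, pow_succ]
    simp only [anticommCoeff_single, map_smul, map_add, linearCombination_single, mul_smul_comm,
      smul_mul_assoc, ← smul_add, mul_orderedMonomial hH, hright, two_smul,
      Nat.cast_smul_eq_nsmul, add_right_comm]

lemma mem_span_orderedMonomial_of_mem_adjoin (hH : A * B - B * A = 1) {x : R}
    (hx : x ∈ Algebra.adjoin K {A, B}) :
    x ∈ Submodule.span K (Set.range (orderedMonomial A B)) := by
  set M := Submodule.span K (Set.range (orderedMonomial A B))
  have hmono (p : ℕ × ℕ) : orderedMonomial A B p ∈ M := Submodule.subset_span ⟨p, rfl⟩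
  have hA : M ≤ M.comap (LinearMap.mulLeft K A) := Submodule.span_le.mpr <| by
    rintro _ ⟨p, rfl⟩
    simpa [mul_orderedMonomial hH] using add_mem (hmono _) (nsmul_mem (hmono _) _)
  have hB : M ≤ M.comap (LinearMap.mulLeft K B) := Submodule.span_le.mpr <| by
    rintro _ ⟨p, rfl⟩
    simpa [orderedMonomial, ← mul_assoc, ← pow_succ'] using hmono (p.1 + 1, p.2)
  have hmul : ∀ y ∈ Algebra.adjoin K {A, B}, ∀ z ∈ M, y * z ∈ M := by
    intro y hy
    induction hy using Algebra.adjoin_induction with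
    | mem y hy =>
      rcases hy with rfl | rfl
      exacts [fun z hz => hA hz, fun z hz => hB hz]
    | algebraMap r => exact fun z hz => by simpa [Algebra.smul_def] using M.smul_mem r hz
    | add u v _ _ hu hv => exact fun z hz => by rw [add_mul]; exact add_mem (hu z hz) (hv z hz)
    | mul u v _ _ hu hv => exact fun z hz => by rw [mul_assoc]; exact hu _ (hv z hz)
  simpa [orderedMonomial] using hmul x hx 1 (by simpa [orderedMonomial] using hmono (0, 0))

variable [NoZeroDivisors K] [NeZero (2 : K)]

lemma eq_zero_of_anticomm_eq_zero (hH : A * B - B * A = 1)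
    (hbasis : LinearIndependent K (orderedMonomial A B)) {X : R}
    (hX : X ∈ Algebra.adjoin K {A, B}) (h : A * X + X * A = 0) : X = 0 := by
  have hspan := mem_span_orderedMonomial_of_mem_adjoin hH hX
  rw [← range_linearCombination] at hspan
  obtain ⟨c, rfl⟩ := hspan
  rw [anticomm_linearCombination hH, map_eq_zero_iff _ hbasis,
    map_eq_zero_iff _ anticommCoeff_injective] at h
  rw [h, map_zero]

lemma eq_zero_of_anticomm_anticomm_eq_zero (hH : A * B - B * A = 1)
    (hbasis : LinearIndependent K (orderedMonomial A B)) {X : R}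
    (hX : X ∈ Algebra.adjoin K {A, B}) (h : X * A ^ 2 + 2 • (A * X * A) + A ^ 2 * X = 0) :
    X = 0 := by
  have hA : A ∈ Algebra.adjoin K {A, B} := Algebra.subset_adjoin (Set.mem_insert A _)
  refine eq_zero_of_anticomm_eq_zero hH hbasis hX
    (eq_zero_of_anticomm_eq_zero hH hbasis (add_mem (mul_mem hA hX) (mul_mem hX hA)) ?_)
  rw [← h, two_smul]
  noncomm_ring

end Algebra

end Heisenberg

open Heisenberg

/-- In the Heisenberg algebra (a unital associative `ℂ`-algebra generated by `A`, `B` with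
`AB - BA = 1` in which the ordered monomials `BʲAᵏ` are linearly independent),
no nonzero polynomial in `A`, `B` can satisfy `A₂A² + 2A·A₂·A + A²A₂ = 0`; consequently
with `A₁ = A` the first two color Heisenberg relations force `A₂ = A₃ = 0`. -/
theorem no_polynomial_solution {R : Type*} [Ring R] [Algebra ℂ R]
    (A B : R) (hH : A * B - B * A = 1)
    (hbasis : LinearIndependent ℂ (fun p : ℕ × ℕ => B ^ p.1 * A ^ p.2)) :
    (∀ A₂ : R, A₂ ∈ Algebra.adjoin ℂ ({A, B} : Set R) →
        A₂ * A ^ 2 + 2 • (A * A₂ * A) + A ^ 2 * A₂ = 0 → A₂ = 0) ∧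
    (∀ A₂ A₃ : R, A₂ ∈ Algebra.adjoin ℂ ({A, B} : Set R) →
        A₃ ∈ Algebra.adjoin ℂ ({A, B} : Set R) →
        A * A₂ + A₂ * A = A₃ → A * A₃ + A₃ * A = 0 → A₂ = 0 ∧ A₃ = 0) := by
  refine ⟨fun _ hA₂ => eq_zero_of_anticomm_anticomm_eq_zero hH hbasis hA₂,
    fun _ A₃ hA₂ hA₃ h₂ h₃ => ?_⟩
  obtain rfl : A₃ = 0 := eq_zero_of_anticomm_eq_zero hH hbasis hA₃ h₃
  exact ⟨eq_zero_of_anticomm_eq_zero hH hbasis hA₂ h₂, rfl⟩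
end

section
/- For odd positive integer s, the operators A₁f(x) = f′(x), A₂f(x) = f^(s)(−x) + x·f(−x), A₃f(x) = f(−x) on the space of (s+1)-times differentiable functions satisfy A₁A₂ + A₂A₁ = A₃, A₁A₃ + A₃A₁ = 0, and A₂A₃ + A₃A₂ = 0. If instead s = 2r is even, then A₂A₃ + A₃A₂ = 2A₁^{2r}. -/
/-! The three relations are pointwise identities. `A₁A₃ + A₃A₁ = 0` is the chain rule for
`x ↦ f (-x)`, and `A₁A₂ + A₂A₁ = A₃` follows from the chain and product rules: the two
`f⁽ˢ⁺¹⁾(-x)` terms cancel, as do the two `x f'(-x)` terms, leaving `f(-x)`. For the last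
relation, `(f ∘ neg)⁽ˢ⁾ = (-1)ˢ f⁽ˢ⁾ ∘ neg` while the multiplication terms `± x f(x)` cancel,
so `A₂A₃ + A₃A₂ = ((-1)ˢ + 1) f⁽ˢ⁾`, which is `0` for odd `s` and `2 f⁽ˢ⁾` for even `s`. -/

noncomputable def A2op (s : ℕ) (f : ℝ → ℂ) : ℝ → ℂ :=
  fun x => iteratedDeriv s f (-x) + x * f (-x)

noncomputable def A3op (f : ℝ → ℂ) : ℝ → ℂ := fun x => f (-x)

theorem deriv_A3op (f : ℝ → ℂ) (x : ℝ) : deriv (A3op f) x = -deriv f (-x) :=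
  deriv_comp_neg f x

theorem deriv_A3op_add_A3op_deriv (f : ℝ → ℂ) (x : ℝ) :
    deriv (A3op f) x + A3op (deriv f) x = 0 :=
  (deriv_A3op f x).symm ▸ neg_add_cancel _

theorem deriv_A2op {s : ℕ} {f : ℝ → ℂ} {x : ℝ}
    (hfs : DifferentiableAt ℝ (iteratedDeriv s f) (-x))
    (hf : DifferentiableAt ℝ f (-x)) :
    deriv (A2op s f) x = -iteratedDeriv (s + 1) f (-x) + f (-x) - x * deriv f (-x) := by
  change deriv (fun y => iteratedDeriv s f (-y) + (y : ℂ) * f (-y)) x = _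
  have hfs_neg : DifferentiableAt ℝ (fun y => iteratedDeriv s f (-y)) x :=
    differentiableAt_comp_neg.mpr hfs
  have hf_neg : DifferentiableAt ℝ (fun y => f (-y)) x := differentiableAt_comp_neg.mpr hf
  have hofReal : HasDerivAt (fun y : ℝ => (y : ℂ)) 1 x := (hasDerivAt_id x).ofReal_comp
  have hmul : DifferentiableAt ℝ (fun y : ℝ => (y : ℂ) * f (-y)) x :=
    hofReal.differentiableAt.mul hf_neg
  rw [deriv_fun_add hfs_neg hmul, deriv_fun_mul hofReal.differentiableAt hf_neg, hofReal.deriv,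
    deriv_comp_neg, deriv_comp_neg, iteratedDeriv_succ]
  ring

theorem deriv_A2op_add_A2op_deriv {s : ℕ} {f : ℝ → ℂ} {x : ℝ}
    (hfs : DifferentiableAt ℝ (iteratedDeriv s f) (-x))
    (hf : DifferentiableAt ℝ f (-x)) :
    deriv (A2op s f) x + A2op s (deriv f) x = A3op f x := by
  rw [deriv_A2op hfs hf, A2op, A3op, ← iteratedDeriv_succ']
  ring

theorem A2op_A3op_add_A3op_A2op (s : ℕ) (f : ℝ → ℂ) (x : ℝ) :
    A2op s (A3op f) x + A3op (A2op s f) x = ((-1) ^ s + 1) * iteratedDeriv s f x := by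
  change iteratedDeriv s (fun y => f (-y)) (-x) + _ + (_ + _) = _
  rw [iteratedDeriv_comp_neg]
  simp only [A3op, neg_neg, Complex.real_smul]
  push_cast
  ring

theorem color_heisenberg_higher_derivative_rep_general (s : ℕ)
    (f : ℝ → ℂ) (hf : ContDiff ℝ ((s : ℕ∞) + 1) f) :
    (Odd s → ∀ x : ℝ,
      deriv (A2op s f) x + A2op s (deriv f) x = A3op f x ∧
      deriv (A3op f) x + A3op (deriv f) x = 0 ∧
      A2op s (A3op f) x + A3op (A2op s f) x = 0) ∧
    (∀ r : ℕ, s = 2 * r → ∀ x : ℝ,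
      A2op s (A3op f) x + A3op (A2op s f) x = 2 * iteratedDeriv (2 * r) f x) := by
  have hfs : Differentiable ℝ (iteratedDeriv s f) := hf.differentiable_iteratedDeriv' s
  have hf₁ : Differentiable ℝ f := hf.differentiable (by simp)
  refine ⟨fun hodd x => ⟨deriv_A2op_add_A2op_deriv (hfs _) (hf₁ _),
    deriv_A3op_add_A3op_deriv f x, ?_⟩, fun r hr x => ?_⟩
  · rw [A2op_A3op_add_A3op_A2op, hodd.neg_one_pow, neg_add_cancel, zero_mul]
  · rw [A2op_A3op_add_A3op_A2op, hr, (even_two_mul r).neg_one_pow]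
    norm_num

/-- For odd positive `s`, the operators `A₁f = f'`, `A₂f(x) = f⁽ˢ⁾(-x) + x f(-x)`,
`A₃f(x) = f(-x)` on `(s+1)`-times continuously differentiable functions satisfy the
color Heisenberg relations; for even `s = 2r` the third relation becomes
`A₂A₃ + A₃A₂ = 2A₁^{2r}`. -/
theorem color_heisenberg_higher_derivative_rep (s : ℕ) (hs : 0 < s)
    (f : ℝ → ℂ) (hf : ContDiff ℝ ((s : ℕ∞) + 1) f) :
    (Odd s → ∀ x : ℝ,
      deriv (A2op s f) x + A2op s (deriv f) x = A3op f x ∧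
      deriv (A3op f) x + A3op (deriv f) x = 0 ∧
      A2op s (A3op f) x + A3op (A2op s f) x = 0) ∧
    (∀ r : ℕ, s = 2 * r → ∀ x : ℝ,
      A2op s (A3op f) x + A3op (A2op s f) x = 2 * iteratedDeriv (2 * r) f x) :=
  color_heisenberg_higher_derivative_rep_general s f hf
end

section
/- With σ₁, σ₂, σ₃ the Pauli matrices, the elements A₁ = σ₁ ⊗ A, A₂ = −i σ₂ ⊗ B, A₃ = σ₃ ⊗ I in M₂(ℂ) ⊗ R satisfy the color Heisenberg relations A₁A₂ + A₂A₁ = A₃, A₁A₃ + A₃A₁ = 0, A₂A₃ + A₃A₂ = 0, whenever AB − BA = I in R. -/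
open scoped TensorProduct

/-- With the Pauli matrices, `A₁ = σ₁ ⊗ A`, `A₂ = -i σ₂ ⊗ B`, `A₃ = σ₃ ⊗ I` in
`M₂(ℂ) ⊗ R` satisfy the color Heisenberg relations whenever `AB - BA = 1` in `R`. -/
theorem color_heisenberg_pauli_tensor_rep {R : Type*} [Ring R] [Algebra ℂ R]
    (A B : R) (h : A * B - B * A = 1) :
    let σ₁ : Matrix (Fin 2) (Fin 2) ℂ := !![0, 1; 1, 0]
    let σ₂ : Matrix (Fin 2) (Fin 2) ℂ := !![0, -Complex.I; Complex.I, 0]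
    let σ₃ : Matrix (Fin 2) (Fin 2) ℂ := !![1, 0; 0, -1]
    let A₁ : Matrix (Fin 2) (Fin 2) ℂ ⊗[ℂ] R := σ₁ ⊗ₜ A
    let A₂ : Matrix (Fin 2) (Fin 2) ℂ ⊗[ℂ] R := ((-Complex.I) • σ₂) ⊗ₜ B
    let A₃ : Matrix (Fin 2) (Fin 2) ℂ ⊗[ℂ] R := σ₃ ⊗ₜ (1 : R)
    A₁ * A₂ + A₂ * A₁ = A₃ ∧ A₁ * A₃ + A₃ * A₁ = 0 ∧ A₂ * A₃ + A₃ * A₂ = 0 := by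
  intro σ₁ σ₂ σ₃ A₁ A₂ A₃
  have e1 : σ₁ * ((-Complex.I) • σ₂) = σ₃ := by
    ext i j; fin_cases i <;> fin_cases j <;>
      simp [σ₁, σ₂, σ₃, Matrix.mul_apply, Fin.sum_univ_two]
  have e2 : ((-Complex.I) • σ₂) * σ₁ = -σ₃ := by
    ext i j; fin_cases i <;> fin_cases j <;>
      simp [σ₁, σ₂, σ₃, Matrix.mul_apply, Fin.sum_univ_two]
  have e3 : σ₁ * σ₃ = -(σ₃ * σ₁) := by
    ext i j; fin_cases i <;> fin_cases j <;>
      simp [σ₁, σ₂, σ₃, Matrix.mul_apply, Fin.sum_univ_two]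
  have e4 : ((-Complex.I) • σ₂) * σ₃ = -(σ₃ * ((-Complex.I) • σ₂)) := by
    ext i j; fin_cases i <;> fin_cases j <;>
      simp [σ₁, σ₂, σ₃, Matrix.mul_apply, Fin.sum_univ_two]
  refine ⟨?_, ?_, ?_⟩
  · show σ₁ ⊗ₜ A * ((-Complex.I) • σ₂) ⊗ₜ B + ((-Complex.I) • σ₂) ⊗ₜ B * σ₁ ⊗ₜ A = σ₃ ⊗ₜ (1:R)
    rw [Algebra.TensorProduct.tmul_mul_tmul, Algebra.TensorProduct.tmul_mul_tmul, e1, e2,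
      TensorProduct.neg_tmul, ← sub_eq_add_neg, ← TensorProduct.tmul_sub, h]
  · show σ₁ ⊗ₜ A * σ₃ ⊗ₜ (1:R) + σ₃ ⊗ₜ (1:R) * σ₁ ⊗ₜ A = 0
    rw [Algebra.TensorProduct.tmul_mul_tmul, Algebra.TensorProduct.tmul_mul_tmul, e3,
      TensorProduct.neg_tmul, mul_one, one_mul, neg_add_cancel]
  · show ((-Complex.I) • σ₂) ⊗ₜ B * σ₃ ⊗ₜ (1:R) + σ₃ ⊗ₜ (1:R) * ((-Complex.I) • σ₂) ⊗ₜ B = 0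
    rw [Algebra.TensorProduct.tmul_mul_tmul, Algebra.TensorProduct.tmul_mul_tmul, e4,
      TensorProduct.neg_tmul, mul_one, one_mul, neg_add_cancel]
end

section
/- For every nonnegative integer n and all x, x^n = (1/2) Σ_{k=0}^{⌊n/2⌋} (E_{2k}/(2k)!) · (n!/(n−2k)!) · [(x−1)^{n−2k} + (x+1)^{n−2k}], where E_{2k} are the Euler numbers. Equivalently, for every polynomial p ∈ ℂ[x], p(x) = (1/2) Σ_{k≥0} (E_{2k}/(2k)!) [p^{(2k)}(x−1) + p^{(2k)}(x+1)]. -/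
/-!
By Taylor's formula, `½[p(x - 1) + p(x + 1)] = Σⱼ p⁽²ʲ⁾(x)/(2j)!`, i.e. it is `cosh(D) p` evaluated
at `x`, where `D` is differentiation. The right-hand side is therefore `E(D) cosh(D) p` at `x`,
and this is `p(x)` because `E(t) cosh(t) = 1`: the double sum over `(k, j)` collapses along the
diagonals `k + j = m`, where the recurrence `Σₖ C(2m, 2k) E_{2k} = δ_{m,0}` defining the Euler
numbers kills every term with `m > 0`. The formula for `xⁿ` is the case `p = Xⁿ`.
-/

open Polynomial

/-- `eulerE n` is the Euler number `E_{2n}`, defined through the recurrence coming from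
`E(t)·cosh(t) = 1`, i.e. `Σ_{k=0}^{n} C(2n,2k) E_{2k} = δ_{n,0}`, equivalent to the
exponential generating function `2eᵗ/(e^{2t}+1) = Σ E_k tᵏ/k!` (with `E_{2k+1} = 0`). -/
noncomputable def eulerE : ℕ → ℂ
  | 0 => 1
  | n + 1 =>
      -∑ k ∈ (Finset.range (n + 1)).attach,
          ((Nat.choose (2 * (n + 1)) (2 * k.1)) : ℂ) * eulerE k.1
  decreasing_by exact Finset.mem_range.mp k.2

open Finset Nat

theorem sum_range_two_mul {M : Type*} [AddCommMonoid M] (f : ℕ → M) (N : ℕ) :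
    ∑ n ∈ range (2 * N), f n = ∑ j ∈ range N, (f (2 * j) + f (2 * j + 1)) := by
  induction N with
  | zero => simp
  | succ N ih =>
    rw [show 2 * (N + 1) = 2 * N + 1 + 1 by ring, sum_range_succ, sum_range_succ, ih,
      sum_range_succ, add_assoc]

theorem sum_range_sum_range_eq_sum_range_diag {M : Type*} [AddCommMonoid M] (n : ℕ)
    (f : ℕ → ℕ → M) (hf : ∀ k j, n ≤ k + j → f k j = 0) :
    ∑ k ∈ range n, ∑ j ∈ range n, f k j = ∑ m ∈ range n, ∑ k ∈ range (m + 1), f k (m - k) := by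
  rw [sum_range_diag_flip]
  refine sum_congr rfl fun k _ => (sum_subset (range_subset_range.2 (by omega)) ?_).symm
  intro j hj hj'
  simp only [mem_range] at hj hj'
  exact hf k j (by omega)

theorem eval_add_eq_sum_iterate_derivative {K : Type*} [Field K] [CharZero K] (p : K[X])
    {N : ℕ} (hN : p.natDegree < N) (x h : K) :
    p.eval (x + h) = ∑ n ∈ range N, (derivative^[n] p).eval x / n ! * h ^ n := by
  rw [add_comm, ← taylor_eval, eval_eq_sum_range' ((natDegree_taylor p x).trans_lt hN)]
  refine sum_congr rfl fun n _ => ?_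
  rw [taylor_coeff, ← factorial_smul_hasseDeriv, LinearMap.smul_apply, eval_smul, nsmul_eq_mul,
    mul_div_cancel_left₀ _ (by exact_mod_cast n.factorial_ne_zero)]

theorem eval_sub_one_add_eval_add_one {K : Type*} [Field K] [CharZero K] (p : K[X])
    {N : ℕ} (hN : p.natDegree < 2 * N) (x : K) :
    p.eval (x - 1) + p.eval (x + 1) =
      2 * ∑ j ∈ range N, (derivative^[2 * j] p).eval x / (2 * j) ! := by
  rw [sub_eq_add_neg, eval_add_eq_sum_iterate_derivative p hN,
    eval_add_eq_sum_iterate_derivative p hN, ← sum_add_distrib, sum_range_two_mul, mul_sum]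
  refine sum_congr rfl fun j _ => ?_
  simp only [pow_succ, pow_mul, one_pow]
  ring

theorem eulerE_recurrence (m : ℕ) :
    ∑ k ∈ range (m + 1), (Nat.choose (2 * m) (2 * k) : ℂ) * eulerE k = if m = 0 then 1 else 0 := by
  cases m with
  | zero => simp [eulerE]
  | succ m =>
    rw [sum_range_succ, Nat.choose_self, eulerE, sum_attach (range (m + 1))
      (fun k => (Nat.choose (2 * (m + 1)) (2 * k) : ℂ) * eulerE k)]
    simp

theorem sum_eulerE_div_factorial_div_factorial (m : ℕ) :
    ∑ k ∈ range (m + 1), eulerE k / (2 * k) ! / (2 * (m - k)) ! = if m = 0 then 1 else 0 := by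
  have hm : ((2 * m) ! : ℂ) ≠ 0 := by exact_mod_cast (2 * m).factorial_ne_zero
  have hchoose : ∀ k ∈ range (m + 1), eulerE k / (2 * k) ! / (2 * (m - k)) ! =
      (Nat.choose (2 * m) (2 * k) : ℂ) * eulerE k / (2 * m) ! := by
    intro k hk
    rw [Nat.cast_choose ℂ (by simp at hk; omega), show 2 * m - 2 * k = 2 * (m - k) by omega]
    field_simp
  rw [sum_congr rfl hchoose, ← sum_div, eulerE_recurrence]
  split_ifs with h0 <;> simp [h0]

theorem eval_eq_half_sum_eulerE_mul_iterate_derivative (p : ℂ[X]) (x : ℂ) :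
    p.eval x = (1 / 2) * ∑ k ∈ range (p.natDegree + 1), eulerE k / (2 * k) ! *
      ((derivative^[2 * k] p).eval (x - 1) + (derivative^[2 * k] p).eval (x + 1)) := by
  set d := p.natDegree
  set a : ℕ → ℂ := fun m => (derivative^[2 * m] p).eval x
  have ha : ∀ m, d + 1 ≤ m → a m = 0 := fun m hm => by
    simp only [a, iterate_derivative_eq_zero (show d < 2 * m by omega), eval_zero]
  have hshift : ∀ k, (derivative^[2 * k] p).eval (x - 1) + (derivative^[2 * k] p).eval (x + 1) =
      2 * ∑ j ∈ range (d + 1), a (k + j) / (2 * j) ! := fun k => by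
    rw [eval_sub_one_add_eval_add_one _ (((natDegree_iterate_derivative p _).trans
      (Nat.sub_le _ _)).trans_lt (show d < 2 * (d + 1) by omega))]
    refine congrArg (2 * ·) (sum_congr rfl fun j _ => ?_)
    rw [← Function.iterate_add_apply, show 2 * j + 2 * k = 2 * (k + j) by ring]
  calc p.eval x = ∑ m ∈ range (d + 1), a m * if m = 0 then 1 else 0 := by simp [a]
    _ = ∑ m ∈ range (d + 1), ∑ k ∈ range (m + 1),
          eulerE k / (2 * k) ! * (a (k + (m - k)) / (2 * (m - k)) !) := by
      refine sum_congr rfl fun m _ => ?_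
      rw [← sum_eulerE_div_factorial_div_factorial, mul_sum]
      refine sum_congr rfl fun k hk => ?_
      rw [show k + (m - k) = m by simp at hk; omega]
      ring
    _ = ∑ k ∈ range (d + 1), ∑ j ∈ range (d + 1),
          eulerE k / (2 * k) ! * (a (k + j) / (2 * j) !) := by
      rw [sum_range_sum_range_eq_sum_range_diag]
      exact fun k j h => by simp only [ha _ h, zero_div, mul_zero]
    _ = _ := by
      simp only [hshift, mul_sum]
      exact sum_congr rfl fun k _ => sum_congr rfl fun j _ => by ring

/-- Euler-number interpolation formula: for every `n` and `x`,
`xⁿ = ½ Σ_{k=0}^{⌊n/2⌋} (E_{2k}/(2k)!)·(n!/(n-2k)!)·[(x-1)^{n-2k} + (x+1)^{n-2k}]`;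
equivalently, every polynomial `p` satisfies
`p(x) = ½ Σ_k (E_{2k}/(2k)!)[p^{(2k)}(x-1) + p^{(2k)}(x+1)]`. -/
theorem euler_interpolation :
    (∀ (n : ℕ) (x : ℂ),
      x ^ n = (1 / 2) * ∑ k ∈ Finset.range (n / 2 + 1),
        eulerE k / (Nat.factorial (2 * k))
          * (Nat.descFactorial n (2 * k))
          * ((x - 1) ^ (n - 2 * k) + (x + 1) ^ (n - 2 * k))) ∧
    (∀ (p : Polynomial ℂ) (x : ℂ),
      p.eval x = (1 / 2) * ∑ k ∈ Finset.range (p.natDegree + 1),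
        eulerE k / (Nat.factorial (2 * k))
          * ((Polynomial.derivative^[2 * k] p).eval (x - 1)
             + (Polynomial.derivative^[2 * k] p).eval (x + 1))) := by
  refine ⟨fun n x => ?_, eval_eq_half_sum_eulerE_mul_iterate_derivative⟩
  have hvanish : ∀ k ∈ range (n + 1), k ∉ range (n / 2 + 1) →
      eulerE k / (2 * k) ! * (n.descFactorial (2 * k))
        * ((x - 1) ^ (n - 2 * k) + (x + 1) ^ (n - 2 * k)) = 0 := fun k _ hk => by
    rw [descFactorial_eq_zero_iff_lt.2 (by simp at hk; omega)]
    simp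
  rw [sum_subset (range_subset_range.2 (by omega)) hvanish]
  simpa [iterate_derivative_X_pow_eq_C_mul, mul_add, mul_assoc] using
    eval_eq_half_sum_eulerE_mul_iterate_derivative (X ^ n) x
end

section
/- For every polynomial p ∈ ℂ[x], p(x) = Σ_{k=0}^∞ ((−1)^k / 2^{k+1}) Σ_{l=0}^{k} (−1)^l C(k,l) [p(x − 2(k−l)) + p(x + 2(k−l))], where the outer sum is finite on each polynomial (all terms with k > deg p combine to cancel). In particular x^n = Σ_{k≥0} ((−1)^k/2^{k+1}) Σ_{l=0}^k (−1)^l C(k,l)[(x−2(k−l))^n + (x+2(k−l))^n]. -/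
open Polynomial Finset

noncomputable def Dop (c : ℂ) (q : ℂ[X]) : ℂ[X] := taylor c q - q

lemma taylor_coeff_of_le (c : ℂ) (q : ℂ[X]) {i : ℕ} (h : q.natDegree ≤ i) :
    (taylor c q).coeff i = q.coeff i := by
  rw [taylor_coeff]
  have hh : hasseDeriv i q = C (q.coeff i) := by
    ext n
    rw [hasseDeriv_coeff, coeff_C]
    rcases n with _ | n
    · simp
    · have : q.coeff (n + 1 + i) = 0 :=
        coeff_eq_zero_of_natDegree_lt (by omega)
      simp [this]
  rw [hh, eval_C]

lemma natDegree_Dop_le {c : ℂ} {q : ℂ[X]} {m : ℕ} (h : q.natDegree ≤ m + 1) :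
    (Dop c q).natDegree ≤ m := by
  rw [natDegree_le_iff_coeff_eq_zero]
  intro i hi
  have hiq : q.natDegree ≤ i := le_trans h hi
  simp [Dop, coeff_sub, taylor_coeff_of_le c q hiq]

lemma Dop_iterate_zero {c : ℂ} : ∀ (m : ℕ) (q : ℂ[X]), q.natDegree ≤ m → (Dop c)^[m + 1] q = 0 := by
  intro m
  induction m with
  | zero =>
    intro q h
    obtain ⟨a, rfl⟩ : ∃ a, q = C a := ⟨q.coeff 0, Polynomial.eq_C_of_natDegree_le_zero h⟩
    simp [Dop, taylor_C]
  | succ m ih =>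
    intro q h
    rw [Function.iterate_succ_apply]
    exact ih _ (natDegree_Dop_le h)

lemma sum_pascal (g : ℕ → ℂ) (k : ℕ) :
    ∑ l ∈ range (k + 2), (-1 : ℂ) ^ l * ((k + 1).choose l : ℂ) * g (k + 1 - l)
    = ∑ l ∈ range (k + 1), (-1 : ℂ) ^ l * (k.choose l : ℂ) * g (k + 1 - l)
      - ∑ l ∈ range (k + 1), (-1 : ℂ) ^ l * (k.choose l : ℂ) * g (k - l) := by
  rw [Finset.sum_range_succ' (fun l => (-1 : ℂ) ^ l * ((k + 1).choose l : ℂ) * g (k + 1 - l)) (k + 1)]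
  rw [Finset.sum_range_succ' (fun l => (-1 : ℂ) ^ l * (k.choose l : ℂ) * g (k + 1 - l)) k]
  have hext : ∑ l ∈ range k, (-1 : ℂ) ^ (l + 1) * (k.choose (l + 1) : ℂ) * g (k + 1 - (l + 1))
      = ∑ l ∈ range (k + 1), (-1 : ℂ) ^ (l + 1) * (k.choose (l + 1) : ℂ) * g (k - l) := by
    rw [Finset.sum_range_succ]
    simp [Nat.choose_succ_self]
  simp only [Nat.succ_sub_succ] at hext ⊢
  rw [hext]
  have hsplit : ∀ l ∈ range (k + 1),
      (-1 : ℂ) ^ (l + 1) * (((k + 1).choose (l + 1) : ℕ) : ℂ) * g (k - l)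
      = (-1 : ℂ) ^ (l + 1) * (k.choose l : ℂ) * g (k - l)
        + (-1 : ℂ) ^ (l + 1) * (k.choose (l + 1) : ℂ) * g (k - l) := by
    intro l _
    rw [Nat.choose_succ_succ]
    push_cast
    ring
  rw [Finset.sum_congr rfl hsplit, Finset.sum_add_distrib]
  have : ∀ l ∈ range (k + 1), (-1 : ℂ) ^ (l + 1) * (k.choose l : ℂ) * g (k - l)
      = -((-1 : ℂ) ^ l * (k.choose l : ℂ) * g (k - l)) := by
    intro l _; ring
  rw [Finset.sum_congr rfl this, Finset.sum_neg_distrib]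
  simp
  ring

lemma Dop_iterate_eval (c : ℂ) (p : ℂ[X]) :
    ∀ (k : ℕ) (x : ℂ), ((Dop c)^[k] p).eval x
      = ∑ l ∈ range (k + 1), (-1 : ℂ) ^ l * (k.choose l : ℂ) * p.eval (x + c * ((k - l : ℕ) : ℂ)) := by
  intro k
  induction k with
  | zero => intro x; simp
  | succ k ih =>
    intro x
    rw [Function.iterate_succ_apply']
    have hD : ∀ q : ℂ[X], (Dop c q).eval x = q.eval (x + c) - q.eval x := by
      intro q; simp [Dop, eval_sub, taylor_eval]
    rw [hD, ih, ih]
    have harg : ∀ l ∈ range (k + 1),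
        (-1 : ℂ) ^ l * (k.choose l : ℂ) * p.eval (x + c + c * ((k - l : ℕ) : ℂ))
        = (-1 : ℂ) ^ l * (k.choose l : ℂ) * p.eval (x + c * ((k + 1 - l : ℕ) : ℂ)) := by
      intro l hl
      have hlk : l ≤ k := Nat.lt_succ_iff.mp (Finset.mem_range.mp hl)
      have : (k + 1 - l : ℕ) = (k - l) + 1 := by omega
      rw [this]
      push_cast
      ring_nf
    rw [Finset.sum_congr rfl harg]
    exact (sum_pascal (fun j => p.eval (x + c * (j : ℂ))) k).symm

noncomputable def Aop (c : ℂ) (p : ℂ[X]) (K : ℕ) : ℂ[X] :=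
  ∑ k ∈ range (K + 1), ((-1 : ℂ) ^ k / 2 ^ (k + 1)) • (Dop c)^[k] p

lemma key (c : ℂ) (p : ℂ[X]) (K : ℕ) (hK : p.natDegree ≤ K) :
    taylor c (Aop c p K) + Aop c p K = p := by
  have htay : ∀ q : ℂ[X], taylor c q = Dop c q + q := by
    intro q; simp [Dop]
  rw [Aop, map_sum]
  simp only [map_smul]
  have h1 : ∀ k, taylor c ((Dop c)^[k] p)
      = (Dop c)^[k + 1] p + (Dop c)^[k] p := by
    intro k; rw [htay, Function.iterate_succ_apply']
  simp only [h1, smul_add]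
  rw [Finset.sum_add_distrib, add_assoc, ← Finset.sum_add_distrib]
  -- first sum: peel last term which is zero
  have hz : (Dop c)^[K + 1] p = 0 := Dop_iterate_zero K p hK
  rw [Finset.sum_range_succ (fun k => ((-1 : ℂ) ^ k / 2 ^ (k + 1)) • (Dop c)^[k + 1] p) K]
  rw [hz, smul_zero, add_zero]
  -- second double sum: peel first term
  rw [Finset.sum_range_succ' (fun k => ((-1 : ℂ) ^ k / 2 ^ (k + 1)) • (Dop c)^[k] p
      + ((-1 : ℂ) ^ k / 2 ^ (k + 1)) • (Dop c)^[k] p) K]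
  have hcomb : ∀ k ∈ range K,
      ((-1 : ℂ) ^ k / 2 ^ (k + 1)) • (Dop c)^[k + 1] p
      + (((-1 : ℂ) ^ (k + 1) / 2 ^ (k + 1 + 1)) • (Dop c)^[k + 1] p
        + ((-1 : ℂ) ^ (k + 1) / 2 ^ (k + 1 + 1)) • (Dop c)^[k + 1] p)
      = 0 := by
    intro k _
    rw [← add_smul, ← add_smul]
    have : (-1 : ℂ) ^ k / 2 ^ (k + 1) + ((-1 : ℂ) ^ (k + 1) / 2 ^ (k + 1 + 1)
        + (-1 : ℂ) ^ (k + 1) / 2 ^ (k + 1 + 1)) = 0 := by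
      field_simp
      ring
    rw [this, zero_smul]
  rw [← add_assoc, ← Finset.sum_add_distrib, Finset.sum_congr rfl hcomb]
  simp only [Finset.sum_const_zero, zero_add, pow_zero, pow_one, ← add_smul]
  norm_num

lemma rigid (q : ℂ[X]) (h : taylor 2 q + q = 0) : q = 0 := by
  by_contra hq
  have h1 : (taylor (2 : ℂ) q + q).coeff q.natDegree = 2 * q.leadingCoeff := by
    rw [coeff_add, taylor_coeff_of_le 2 q le_rfl, leadingCoeff]
    ring
  rw [h, coeff_zero] at h1
  have := leadingCoeff_ne_zero.mpr hq
  have h2 : q.leadingCoeff = 0 := by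
    by_contra h2
    exact h2 (by linear_combination -h1 / 2)
  exact this h2

lemma AB (p : ℂ[X]) (K : ℕ) (hK : p.natDegree ≤ K) :
    Aop 2 p K + Aop (-2) p K = p := by
  have h1 := key 2 p K hK
  have h2 := key (-2) p K hK
  have h2' : Aop (-2) p K + taylor 2 (Aop (-2) p K) = taylor 2 p := by
    have := congrArg (taylor (2 : ℂ)) h2
    rw [map_add, taylor_taylor] at this
    norm_num at this
    linear_combination this
  have hzero : taylor (2 : ℂ) (Aop 2 p K + Aop (-2) p K - p)
      + (Aop 2 p K + Aop (-2) p K - p) = 0 := by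
    rw [map_sub, map_add]
    linear_combination h1 + h2' - congrArg (taylor (2:ℂ)) (rfl : p = p)
  have := rigid _ hzero
  linear_combination this


/-- Difference interpolation formula: for every polynomial `p` and every truncation level
`K ≥ deg p` (the terms with `k > deg p` cancel, so the infinite sum stabilizes),
`p(x) = Σ_{k=0}^{K} ((-1)^k/2^{k+1}) Σ_{l=0}^{k} (-1)^l C(k,l)[p(x-2(k-l)) + p(x+2(k-l))]`;
in particular this holds for `p = xⁿ`. -/
theorem difference_interpolation :
    (∀ (p : Polynomial ℂ) (K : ℕ), p.natDegree ≤ K → ∀ x : ℂ,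
      p.eval x = ∑ k ∈ Finset.range (K + 1), ((-1 : ℂ) ^ k / 2 ^ (k + 1))
        * ∑ l ∈ Finset.range (k + 1), (-1 : ℂ) ^ l * (Nat.choose k l : ℂ)
            * (p.eval (x - 2 * ((k - l : ℕ) : ℂ)) + p.eval (x + 2 * ((k - l : ℕ) : ℂ)))) ∧
    (∀ (n K : ℕ), n ≤ K → ∀ x : ℂ,
      x ^ n = ∑ k ∈ Finset.range (K + 1), ((-1 : ℂ) ^ k / 2 ^ (k + 1))
        * ∑ l ∈ Finset.range (k + 1), (-1 : ℂ) ^ l * (Nat.choose k l : ℂ)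
            * ((x - 2 * ((k - l : ℕ) : ℂ)) ^ n + (x + 2 * ((k - l : ℕ) : ℂ)) ^ n)) := by
  have main : ∀ (p : Polynomial ℂ) (K : ℕ), p.natDegree ≤ K → ∀ x : ℂ,
      p.eval x = ∑ k ∈ Finset.range (K + 1), ((-1 : ℂ) ^ k / 2 ^ (k + 1))
        * ∑ l ∈ Finset.range (k + 1), (-1 : ℂ) ^ l * (Nat.choose k l : ℂ)
            * (p.eval (x - 2 * ((k - l : ℕ) : ℂ)) + p.eval (x + 2 * ((k - l : ℕ) : ℂ))) := by
    intro p K hK x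
    have := congrArg (fun q : ℂ[X] => q.eval x) (AB p K hK)
    simp only [eval_add, Aop, eval_finset_sum, eval_smul, smul_eq_mul] at this
    rw [← this, ← Finset.sum_add_distrib]
    apply Finset.sum_congr rfl
    intro k _
    rw [← mul_add, Dop_iterate_eval, Dop_iterate_eval, ← Finset.sum_add_distrib]
    congr 1
    apply Finset.sum_congr rfl
    intro l _
    ring_nf
  refine ⟨main, ?_⟩
  intro n K hK x
  have := main (X ^ n) K (by simpa using hK) x
  simpa using this
end

section
/- Let S(m,k) denote the Stirling numbers of the second kind and define g_m = Σ_{k=0}^m S(m,k)·(−1)^k·k!/2^k for m ≥ 1, g_0 = 0. Then g_m = 0 for every positive even integer m. Equivalently, the exponential generating function Σ_m g_m t^m/m! equals (1−eᵗ)/(1+eᵗ), which is an odd function of t. -/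
/-- Stirling numbers of the second kind:
`S(m,k) = (1/k!) Σ_{j=0}^{k} (-1)^{k-j} C(k,j) jᵐ` (with `S(0,0)=1`, `S(0,k)=0` for `k≥1`,
which this formula also yields since `0^0 = 1`). -/
noncomputable def stirling2 (m k : ℕ) : ℂ :=
  (1 / (Nat.factorial k : ℂ))
    * ∑ j ∈ Finset.range (k + 1), (-1 : ℂ) ^ (k - j) * (Nat.choose k j : ℂ) * (j : ℂ) ^ m

open Finset

lemma diff_step (n : ℕ) (p : ℕ → ℂ) :
    ∑ j ∈ range (n + 2), (-1 : ℂ) ^ j * ((n+1).choose j : ℂ) * p j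
      = ∑ j ∈ range (n + 1), (-1 : ℂ) ^ j * (n.choose j : ℂ) * (p j - p (j + 1)) := by
  set X := ∑ j ∈ range (n+1), (-1:ℂ)^j * (n.choose j : ℂ) * p (j+1) with hX
  set Y := ∑ j ∈ range (n+1), (-1:ℂ)^j * (n.choose (j+1) : ℂ) * p (j+1) with hY
  set U := ∑ j ∈ range (n+1), (-1:ℂ)^j * (n.choose j : ℂ) * p j with hU
  have e1 : ∑ j ∈ range (n + 2), (-1 : ℂ) ^ j * ((n+1).choose j : ℂ) * p j
      = (∑ j ∈ range (n+1), (-1:ℂ)^(j+1) * ((n+1).choose (j+1) : ℂ) * p (j+1)) + p 0 := by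
    rw [Finset.sum_range_succ']; norm_num
  have e2 : (∑ j ∈ range (n+1), (-1:ℂ)^(j+1) * ((n+1).choose (j+1) : ℂ) * p (j+1))
      = -X - Y := by
    have h : ∀ j ∈ range (n+1), (-1:ℂ)^(j+1) * ((n+1).choose (j+1) : ℂ) * p (j+1)
        = -((-1:ℂ)^j * (n.choose j : ℂ) * p (j+1))
          + -((-1:ℂ)^j * (n.choose (j+1) : ℂ) * p (j+1)) := by
      intro j _
      have : ((n+1).choose (j+1) : ℂ) = (n.choose j : ℂ) + (n.choose (j+1) : ℂ) := by
        rw [Nat.choose_succ_succ]; push_cast; ring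
      rw [this]; ring
    rw [Finset.sum_congr rfl h, Finset.sum_add_distrib, Finset.sum_neg_distrib,
      Finset.sum_neg_distrib, hX, hY]; ring
  have e3 : U = -(∑ j ∈ range n, (-1:ℂ)^j * (n.choose (j+1) : ℂ) * p (j+1)) + p 0 := by
    rw [hU, Finset.sum_range_succ']
    norm_num
    rw [← Finset.sum_neg_distrib]
    apply Finset.sum_congr rfl; intro j _; ring
  have e4 : Y = ∑ j ∈ range n, (-1:ℂ)^j * (n.choose (j+1) : ℂ) * p (j+1) := by
    rw [hY, Finset.sum_range_succ, Nat.choose_succ_self]; norm_num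
  have e5 : ∑ j ∈ range (n + 1), (-1 : ℂ) ^ j * (n.choose j : ℂ) * (p j - p (j + 1))
      = U - X := by
    rw [hU, hX, ← Finset.sum_sub_distrib]
    apply Finset.sum_congr rfl; intro j _; ring
  rw [e1, e2, e5]
  have : Y = p 0 - U := by rw [e4]; linear_combination e3
  rw [this]; ring

lemma alt_pow : ∀ (i n : ℕ), ∀ c : ℂ, i < n →
    ∑ j ∈ range (n+1), (-1:ℂ)^j * (n.choose j : ℂ) * (c + j)^i = 0 := by
  intro i
  induction i using Nat.strong_induction_on with
  | _ i IH =>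
  intro n c h
  obtain ⟨n, rfl⟩ : ∃ n', n = n'+1 := ⟨n-1, by omega⟩
  rw [diff_step n (fun j => (c + (j:ℕ))^i)]
  have key : ∀ j ∈ range (n+1),
      (-1:ℂ)^j * (n.choose j : ℂ) * ((fun j => (c + (j:ℕ))^i) j - (fun j => (c + (j:ℕ))^i) (j+1))
      = ∑ r ∈ range i, -((i.choose r : ℂ) * ((-1:ℂ)^j * (n.choose j : ℂ) * (c + j)^r)) := by
    intro j _
    simp only []
    have hb : (c + ((j+1:ℕ):ℂ))^i = ∑ r ∈ range (i+1), (c+(j:ℂ))^r * (i.choose r : ℂ) := by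
      push_cast
      rw [show c + ((j:ℂ)+1) = (c+(j:ℂ))+1 by ring, add_pow]
      simp
    rw [hb, Finset.sum_range_succ, Nat.choose_self]
    rw [show (-1:ℂ)^j * (n.choose j : ℂ) *
        ((c + (j:ℂ))^i - ((∑ r ∈ range i, (c+(j:ℂ))^r * (i.choose r : ℂ)) + (c+(j:ℂ))^i * ((1:ℕ):ℂ)))
        = -((-1:ℂ)^j * (n.choose j : ℂ) * ∑ r ∈ range i, (c+(j:ℂ))^r * (i.choose r : ℂ)) by
      push_cast; ring]
    rw [Finset.mul_sum, ← Finset.sum_neg_distrib]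
    apply Finset.sum_congr rfl; intro r _; ring
  rw [Finset.sum_congr rfl key, Finset.sum_comm]
  apply Finset.sum_eq_zero
  intro r hr
  rw [Finset.sum_neg_distrib, ← Finset.mul_sum,
    IH r (Finset.mem_range.mp hr) n c (by have := Finset.mem_range.mp hr; omega), mul_zero,
    neg_zero]

lemma choose_range_sum (j e : ℕ) :
    ∑ d ∈ range (e+1), Nat.choose (j+d) j * 2^(e-d)
      = ∑ d ∈ range (e+1), Nat.choose (j+e+1) (j+1+d) := by
  induction e with
  | zero => simp
  | succ e IH =>
    simp only [show j+(e+1)+1 = j+e+2 from by omega, show e+1+1 = e+2 from by omega]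
    have hL : ∑ d ∈ range (e+2), Nat.choose (j+d) j * 2^(e+1-d)
        = 2 * (∑ d ∈ range (e+1), Nat.choose (j+d) j * 2^(e-d)) + Nat.choose (j+e+1) j := by
      rw [Finset.sum_range_succ]
      have : ∀ d ∈ range (e+1), Nat.choose (j+d) j * 2^(e+1-d)
          = 2 * (Nat.choose (j+d) j * 2^(e-d)) := by
        intro d hd
        have hd' := Finset.mem_range.mp hd
        have : e+1-d = (e-d)+1 := by omega
        rw [this, pow_succ]; ring
      rw [Finset.sum_congr rfl this, ← Finset.mul_sum,
        show j+(e+1) = j+e+1 from by omega]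
      simp
    have pas : ∀ d, Nat.choose (j+e+2) (j+1+d)
        = Nat.choose (j+e+1) (j+d) + Nat.choose (j+e+1) (j+1+d) := by
      intro d
      have h1 : j+1+d = (j+d)+1 := by omega
      have h2 : j+e+2 = (j+e+1)+1 := by omega
      rw [h1, h2, Nat.choose_succ_succ]
    have hR : ∑ d ∈ range (e+2), Nat.choose (j+e+2) (j+1+d)
        = 2 * (∑ d ∈ range (e+1), Nat.choose (j+e+1) (j+1+d)) + Nat.choose (j+e+1) j := by
      rw [Finset.sum_congr rfl (fun d _ => pas d), Finset.sum_add_distrib]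
      have s1 : ∑ d ∈ range (e+2), Nat.choose (j+e+1) (j+d)
          = Nat.choose (j+e+1) j + ∑ d ∈ range (e+1), Nat.choose (j+e+1) (j+1+d) := by
        rw [Finset.sum_range_succ']
        have : ∀ d ∈ range (e+1), Nat.choose (j+e+1) (j+(d+1)) = Nat.choose (j+e+1) (j+1+d) := by
          intro d _; congr 1; omega
        rw [Finset.sum_congr rfl this]; simp; omega
      have s2 : ∑ d ∈ range (e+2), Nat.choose (j+e+1) (j+1+d)
          = ∑ d ∈ range (e+1), Nat.choose (j+e+1) (j+1+d) := by
        rw [Finset.sum_range_succ, Nat.choose_eq_zero_of_lt (by omega), add_zero]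
      rw [s1, s2]; ring
    rw [hL, hR, IH]

lemma ico_choose_sum (m j : ℕ) (hjm : j ≤ m) :
    ∑ k ∈ Finset.Ico j (m+1), Nat.choose k j * 2^(m-k)
      = ∑ d ∈ range (m+1-j), Nat.choose (m+1) (j+1+d) := by
  rw [Finset.sum_Ico_eq_sum_range]
  obtain ⟨e, rfl⟩ : ∃ e, m = j + e := ⟨m - j, by omega⟩
  have h1 : j + e + 1 - j = e + 1 := by omega
  rw [h1]
  have h2 : ∀ d ∈ range (e+1), Nat.choose (j+d) j * 2^(j+e-(j+d))
      = Nat.choose (j+d) j * 2^(e-d) := by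
    intro d _; congr 2; omega
  rw [Finset.sum_congr rfl h2, choose_range_sum]

/-- Tail binomial sums. -/
noncomputable def Bc (m j : ℕ) : ℂ :=
  ((∑ d ∈ range (m+1-j), Nat.choose (m+1) (j+1+d) : ℕ) : ℂ)

lemma Bc_zero (m j : ℕ) (h : m + 1 ≤ j) : Bc m j = 0 := by
  unfold Bc
  rw [show m+1-j = 0 from by omega]
  simp

lemma Bc_telescope (m j : ℕ) : Bc m j = ((m+1).choose (j+1) : ℂ) + Bc m (j+1) := by
  rcases le_or_gt (m+1) j with h | h
  · rw [Bc_zero m j h, Bc_zero m (j+1) (by omega), Nat.choose_eq_zero_of_lt (by omega)]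
    simp
  · -- j ≤ m
    unfold Bc
    rw [show m+1-j = (m+1-(j+1))+1 from by omega, Finset.sum_range_succ']
    push_cast
    rw [show j+1+0 = j+1 from by omega]
    have : ∀ d ∈ range (m-j), ((m+1).choose (j+1+(d+1)) : ℂ) = ((m+1).choose (j+1+1+d) : ℂ) := by
      intro d _; congr 2; omega
    rw [Finset.sum_congr rfl this]; ring

lemma Bc_zero_val (m : ℕ) : Bc m 0 + 1 = (2:ℂ)^(m+1) := by
  unfold Bc
  have h := Nat.sum_range_choose (m+1)
  rw [Finset.sum_range_succ'] at h
  have h2 : ∑ d ∈ range (m+1), Nat.choose (m+1) (0+1+d) = 2^(m+1) - 1 := by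
    simp only [Nat.choose_zero_right] at h
    have : ∀ d ∈ range (m+1), Nat.choose (m+1) (0+1+d) = Nat.choose (m+1) (d+1) := by
      intro d _; congr 1; omega
    rw [Finset.sum_congr rfl this]
    omega
  rw [show m+1-0 = m+1 from by omega, h2]
  have : (1:ℕ) ≤ 2^(m+1) := Nat.one_le_two_pow
  push_cast [this]
  ring

lemma term_eq (r k : ℕ) :
    stirling2 r k * (-1:ℂ)^k * (Nat.factorial k : ℂ) / 2^k
      = (∑ j ∈ range (k+1), (-1:ℂ)^j * (k.choose j : ℂ) * (j:ℂ)^r) / 2^k := by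
  have hk : (Nat.factorial k : ℂ) ≠ 0 := Nat.cast_ne_zero.mpr k.factorial_ne_zero
  congr 1
  unfold stirling2
  calc (1 / (Nat.factorial k : ℂ)) * (∑ j ∈ range (k+1), (-1:ℂ)^(k-j) * (k.choose j : ℂ) * (j:ℂ)^r)
        * (-1:ℂ)^k * (Nat.factorial k : ℂ)
      = (∑ j ∈ range (k+1), (-1:ℂ)^(k-j) * (k.choose j : ℂ) * (j:ℂ)^r * (-1:ℂ)^k)
          * ((1 / (Nat.factorial k : ℂ)) * (Nat.factorial k : ℂ)) := by
        rw [← Finset.sum_mul]; ring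
    _ = ∑ j ∈ range (k+1), (-1:ℂ)^j * (k.choose j : ℂ) * (j:ℂ)^r := by
        rw [one_div_mul_cancel hk, mul_one]
        apply Finset.sum_congr rfl
        intro j hj
        have hjk := Finset.mem_range.mp hj
        have key : (-1:ℂ)^(k-j) * (-1:ℂ)^k = (-1:ℂ)^j := by
          rw [← pow_add, show k-j+k = 2*(k-j)+j from by omega, pow_add, pow_mul]
          norm_num
        calc (-1:ℂ)^(k-j) * (k.choose j : ℂ) * (j:ℂ)^r * (-1:ℂ)^k
            = ((-1:ℂ)^(k-j) * (-1:ℂ)^k) * (k.choose j : ℂ) * (j:ℂ)^r := by ring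
          _ = (-1:ℂ)^j * (k.choose j : ℂ) * (j:ℂ)^r := by rw [key]

lemma rep (m r : ℕ) :
    (2:ℂ)^m * ∑ k ∈ range (m+1), stirling2 r k * (-1:ℂ)^k * (Nat.factorial k : ℂ) / 2^k
      = ∑ j ∈ range (m+2), (-1:ℂ)^j * Bc m j * (j:ℂ)^r := by
  rw [Finset.sum_congr rfl (fun k _ => term_eq r k), Finset.mul_sum]
  have step1 : ∀ k ∈ range (m+1),
      (2:ℂ)^m * ((∑ j ∈ range (k+1), (-1:ℂ)^j * (k.choose j : ℂ) * (j:ℂ)^r) / 2^k)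
      = ∑ j ∈ range (k+1), (-1:ℂ)^j * ((k.choose j : ℂ) * 2^(m-k)) * (j:ℂ)^r := by
    intro k hk
    have hkm := Finset.mem_range.mp hk
    have hne : (2:ℂ)^k ≠ 0 := pow_ne_zero _ two_ne_zero
    have h2 : (2:ℂ)^m = 2^(m-k) * 2^k := by rw [← pow_add]; congr 1; omega
    rw [h2, mul_assoc, ← mul_div_assoc, mul_div_cancel_left₀ _ hne, Finset.mul_sum]
    apply Finset.sum_congr rfl; intro j _; ring
  rw [Finset.sum_congr rfl step1]
  rw [Finset.sum_comm' (s' := fun j => Finset.Ico j (m+1)) (t' := range (m+1))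
    (by intro k j; simp only [Finset.mem_range, Finset.mem_Ico]; omega)]
  have inner : ∀ j ∈ range (m+1),
      ∑ k ∈ Finset.Ico j (m+1), (-1:ℂ)^j * ((k.choose j : ℂ) * 2^(m-k)) * (j:ℂ)^r
        = (-1:ℂ)^j * Bc m j * (j:ℂ)^r := by
    intro j hj
    have hjm : j ≤ m := by have := Finset.mem_range.mp hj; omega
    rw [← Finset.sum_mul, ← Finset.mul_sum]
    have hB : ∑ k ∈ Finset.Ico j (m+1), ((k.choose j : ℂ) * 2^(m-k)) = Bc m j := by
      unfold Bc
      rw [← ico_choose_sum m j hjm]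
      push_cast
      rfl
    rw [hB]
  rw [Finset.sum_congr rfl inner]
  have hext : ∑ j ∈ range (m+2), (-1:ℂ)^j * Bc m j * (j:ℂ)^r
      = ∑ j ∈ range (m+1), (-1:ℂ)^j * Bc m j * (j:ℂ)^r := by
    rw [Finset.sum_range_succ, Bc_zero m (m+1) (by omega)]
    simp
  rw [hext]

lemma R1B (m i : ℕ) (hi : 1 ≤ i) (him : i ≤ m) :
    ∑ j ∈ range (m+2), (-1:ℂ)^j * Bc m j * ((j:ℂ)^i + ((j:ℂ)+1)^i) = 0 := by
  have split : ∑ j ∈ range (m+2), (-1:ℂ)^j * Bc m j * ((j:ℂ)^i + ((j:ℂ)+1)^i)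
      = (∑ j ∈ range (m+2), (-1:ℂ)^j * Bc m j * (j:ℂ)^i)
        + ∑ j ∈ range (m+2), (-1:ℂ)^j * Bc m j * ((j:ℂ)+1)^i := by
    rw [← Finset.sum_add_distrib]; apply Finset.sum_congr rfl; intro j _; ring
  have hS1 : ∑ j ∈ range (m+2), (-1:ℂ)^j * Bc m j * (j:ℂ)^i
      = ∑ j ∈ range (m+1), -((-1:ℂ)^j * Bc m (j+1) * ((j:ℂ)+1)^i) := by
    rw [Finset.sum_range_succ']
    have h1 : ∀ j ∈ range (m+1), (-1:ℂ)^(j+1) * Bc m (j+1) * (((j+1:ℕ)):ℂ)^i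
        = -((-1:ℂ)^j * Bc m (j+1) * ((j:ℂ)+1)^i) := by
      intro j _; push_cast; ring
    rw [Finset.sum_congr rfl h1]
    have h0 : (((0:ℕ)):ℂ)^i = 0 := by
      rw [Nat.cast_zero]; exact zero_pow (by omega)
    rw [h0]; ring
  have hext : ∑ j ∈ range (m+1), -((-1:ℂ)^j * Bc m (j+1) * ((j:ℂ)+1)^i)
      = ∑ j ∈ range (m+2), -((-1:ℂ)^j * Bc m (j+1) * ((j:ℂ)+1)^i) := by
    rw [Finset.sum_range_succ _ (m+1), Bc_zero m (m+1+1) (by omega)]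
    ring
  rw [split, hS1, hext, ← Finset.sum_add_distrib]
  have tele : ∀ j ∈ range (m+2),
      -((-1:ℂ)^j * Bc m (j+1) * ((j:ℂ)+1)^i) + (-1:ℂ)^j * Bc m j * ((j:ℂ)+1)^i
      = (-1:ℂ)^j * (((m+1).choose (j+1) : ℂ)) * ((j:ℂ)+1)^i := by
    intro j _
    linear_combination ((-1:ℂ)^j * ((j:ℂ)+1)^i) * Bc_telescope m j
  rw [Finset.sum_congr rfl tele]
  -- now show ∑_{j<m+2} (-1)^j C(m+1,j+1) (j+1)^i = 0
  have hA : ∑ j ∈ range (m+2), (-1:ℂ)^j * ((m+1).choose j : ℂ) * ((0:ℂ) + (j:ℂ))^i = 0 :=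
    alt_pow i (m+1) 0 (by omega)
  rw [Finset.sum_range_succ'] at hA
  have h2 : ∀ j ∈ range (m+1), (-1:ℂ)^(j+1) * ((m+1).choose (j+1) : ℂ) * ((0:ℂ) + ((j+1:ℕ)):ℂ)^i
      = -((-1:ℂ)^j * ((m+1).choose (j+1) : ℂ) * ((j:ℂ)+1)^i) := by
    intro j _; push_cast; ring_nf
  rw [Finset.sum_congr rfl h2] at hA
  have h3 : ((-1:ℂ))^0 * ((m+1).choose 0 : ℂ) * ((0:ℂ) + ((0:ℕ):ℂ))^i = 0 := by
    simp [zero_pow (show i ≠ 0 by omega)]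
  rw [h3, add_zero, Finset.sum_neg_distrib] at hA
  have h4 : ∑ j ∈ range (m+2), (-1:ℂ)^j * (((m+1).choose (j+1) : ℂ)) * ((j:ℂ)+1)^i
      = ∑ j ∈ range (m+1), (-1:ℂ)^j * (((m+1).choose (j+1) : ℂ)) * ((j:ℂ)+1)^i := by
    rw [Finset.sum_range_succ, Nat.choose_eq_zero_of_lt (by omega)]
    simp
  rw [h4]
  linear_combination -hA

lemma R2B (m i : ℕ) (hi : 1 ≤ i) (him : i ≤ m) :
    ∑ j ∈ range (m+2), (-1:ℂ)^j * Bc m j * ((-(j:ℂ))^i + (1-(j:ℂ))^i) = 2^(m+1) := by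
  have split : ∑ j ∈ range (m+2), (-1:ℂ)^j * Bc m j * ((-(j:ℂ))^i + (1-(j:ℂ))^i)
      = (∑ j ∈ range (m+2), (-1:ℂ)^j * Bc m j * (-(j:ℂ))^i)
        + ∑ j ∈ range (m+2), (-1:ℂ)^j * Bc m j * (1-(j:ℂ))^i := by
    rw [← Finset.sum_add_distrib]; apply Finset.sum_congr rfl; intro j _; ring
  have hS2 : ∑ j ∈ range (m+2), (-1:ℂ)^j * Bc m j * (1-(j:ℂ))^i
      = (∑ j ∈ range (m+1), -((-1:ℂ)^j * Bc m (j+1) * (-(j:ℂ))^i)) + Bc m 0 := by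
    rw [Finset.sum_range_succ']
    have h1 : ∀ j ∈ range (m+1), (-1:ℂ)^(j+1) * Bc m (j+1) * (1-(((j+1:ℕ)):ℂ))^i
        = -((-1:ℂ)^j * Bc m (j+1) * (-(j:ℂ))^i) := by
      intro j _
      push_cast
      rw [show (1:ℂ) - ((j:ℂ)+1) = -(j:ℂ) from by ring]
      ring
    rw [Finset.sum_congr rfl h1]
    norm_num
  have hext : ∑ j ∈ range (m+1), -((-1:ℂ)^j * Bc m (j+1) * (-(j:ℂ))^i)
      = ∑ j ∈ range (m+2), -((-1:ℂ)^j * Bc m (j+1) * (-(j:ℂ))^i) := by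
    rw [Finset.sum_range_succ _ (m+1), Bc_zero m (m+1+1) (by omega)]
    ring
  rw [split, hS2, hext, ← add_assoc, ← Finset.sum_add_distrib]
  have tele : ∀ j ∈ range (m+2),
      (-1:ℂ)^j * Bc m j * (-(j:ℂ))^i + -((-1:ℂ)^j * Bc m (j+1) * (-(j:ℂ))^i)
      = (-1:ℂ)^j * (((m+1).choose (j+1) : ℂ)) * (-(j:ℂ))^i := by
    intro j _
    linear_combination ((-1:ℂ)^j * (-(j:ℂ))^i) * Bc_telescope m j
  rw [Finset.sum_congr rfl tele]
  -- claim : ∑_{j<m+2} (-1)^j C(m+1,j+1) (-j)^i = 1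
  have hA : ∑ j ∈ range (m+2), (-1:ℂ)^j * ((m+1).choose j : ℂ) * ((-1:ℂ) + (j:ℂ))^i = 0 :=
    alt_pow i (m+1) (-1) (by omega)
  have hZ : ∑ j ∈ range (m+2), (-1:ℂ)^j * ((m+1).choose j : ℂ) * (1-(j:ℂ))^i = 0 := by
    have : ∀ j ∈ range (m+2), (-1:ℂ)^j * ((m+1).choose j : ℂ) * (1-(j:ℂ))^i
        = (-1:ℂ)^i * ((-1:ℂ)^j * ((m+1).choose j : ℂ) * ((-1:ℂ) + (j:ℂ))^i) := by
      intro j _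
      have hb : (1-(j:ℂ))^i = (-1:ℂ)^i * ((-1:ℂ) + (j:ℂ))^i := by
        rw [show (1:ℂ)-(j:ℂ) = -((-1:ℂ) + (j:ℂ)) from by ring]
        exact neg_pow _ _
      rw [hb]; ring
    rw [Finset.sum_congr rfl this, ← Finset.mul_sum, hA, mul_zero]
  rw [Finset.sum_range_succ'] at hZ
  have h2 : ∀ j ∈ range (m+1), (-1:ℂ)^(j+1) * ((m+1).choose (j+1) : ℂ) * (1-(((j+1:ℕ)):ℂ))^i
      = -((-1:ℂ)^j * ((m+1).choose (j+1) : ℂ) * (-(j:ℂ))^i) := by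
    intro j _
    push_cast
    rw [show (1:ℂ) - ((j:ℂ)+1) = -(j:ℂ) from by ring]
    ring
  rw [Finset.sum_congr rfl h2, Finset.sum_neg_distrib] at hZ
  have h3 : ((-1:ℂ))^0 * ((m+1).choose 0 : ℂ) * (1 - ((0:ℕ):ℂ))^i = 1 := by norm_num
  rw [h3] at hZ
  have h4 : ∑ j ∈ range (m+2), (-1:ℂ)^j * (((m+1).choose (j+1) : ℂ)) * (-(j:ℂ))^i
      = ∑ j ∈ range (m+1), (-1:ℂ)^j * (((m+1).choose (j+1) : ℂ)) * (-(j:ℂ))^i := by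
    rw [Finset.sum_range_succ, Nat.choose_eq_zero_of_lt (by omega)]
    simp
  rw [h4]
  have hX : ∑ j ∈ range (m+1), (-1:ℂ)^j * (((m+1).choose (j+1) : ℂ)) * (-(j:ℂ))^i = 1 := by
    linear_combination -hZ
  rw [hX]
  linear_combination Bc_zero_val m

noncomputable def Gs (m r : ℕ) : ℂ :=
  ∑ k ∈ range (m+1), stirling2 r k * (-1:ℂ)^k * (Nat.factorial k : ℂ) / 2^k

lemma repG (m r : ℕ) :
    (2:ℂ)^m * Gs m r = ∑ j ∈ range (m+2), (-1:ℂ)^j * Bc m j * (j:ℂ)^r := rep m r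

lemma GR1 (m i : ℕ) (hi : 1 ≤ i) (him : i ≤ m) :
    Gs m i + ∑ i' ∈ range (i+1), (i.choose i' : ℂ) * Gs m i' = 0 := by
  have h2m : (2:ℂ)^m ≠ 0 := pow_ne_zero _ two_ne_zero
  have key : (2:ℂ)^m * (Gs m i + ∑ i' ∈ range (i+1), (i.choose i' : ℂ) * Gs m i') = 0 := by
    rw [mul_add, Finset.mul_sum]
    have e0 : (2:ℂ)^m * Gs m i = ∑ j ∈ range (m+2), (-1:ℂ)^j * Bc m j * (j:ℂ)^i := rep m i
    have e1 : ∀ i' ∈ range (i+1), (2:ℂ)^m * ((i.choose i' : ℂ) * Gs m i')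
        = ∑ j ∈ range (m+2), (i.choose i' : ℂ) * ((-1:ℂ)^j * Bc m j * (j:ℂ)^i') := by
      intro i' _
      calc (2:ℂ)^m * ((i.choose i' : ℂ) * Gs m i')
          = (i.choose i' : ℂ) * ((2:ℂ)^m * Gs m i') := by ring
        _ = (i.choose i' : ℂ) * ∑ j ∈ range (m+2), (-1:ℂ)^j * Bc m j * (j:ℂ)^i' := by
            rw [repG m i']
        _ = _ := Finset.mul_sum _ _ _
    rw [e0, Finset.sum_congr rfl e1, Finset.sum_comm]
    have e2 : ∀ j ∈ range (m+2),
        ∑ i' ∈ range (i+1), (i.choose i' : ℂ) * ((-1:ℂ)^j * Bc m j * (j:ℂ)^i')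
        = (-1:ℂ)^j * Bc m j * ((j:ℂ)+1)^i := by
      intro j _
      rw [add_pow (j:ℂ) 1 i, Finset.mul_sum]
      apply Finset.sum_congr rfl
      intro i' _
      rw [one_pow]
      ring
    rw [Finset.sum_congr rfl e2, ← Finset.sum_add_distrib]
    rw [← R1B m i hi him]
    apply Finset.sum_congr rfl
    intro j _
    ring
  rcases mul_eq_zero.mp key with h | h
  · exact absurd h h2m
  · exact h

lemma GR2 (m i : ℕ) (hi : 1 ≤ i) (him : i ≤ m) :
    (-1:ℂ)^i * Gs m i + ∑ i' ∈ range (i+1), (i.choose i' : ℂ) * ((-1:ℂ)^i' * Gs m i') = 2 := by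
  have h2m : (2:ℂ)^m ≠ 0 := pow_ne_zero _ two_ne_zero
  have key : (2:ℂ)^m *
      ((-1:ℂ)^i * Gs m i + ∑ i' ∈ range (i+1), (i.choose i' : ℂ) * ((-1:ℂ)^i' * Gs m i'))
      = (2:ℂ)^m * 2 := by
    rw [mul_add, Finset.mul_sum]
    have e0 : (2:ℂ)^m * ((-1:ℂ)^i * Gs m i)
        = ∑ j ∈ range (m+2), (-1:ℂ)^j * Bc m j * (-(j:ℂ))^i := by
      calc (2:ℂ)^m * ((-1:ℂ)^i * Gs m i) = (-1:ℂ)^i * ((2:ℂ)^m * Gs m i) := by ring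
        _ = (-1:ℂ)^i * ∑ j ∈ range (m+2), (-1:ℂ)^j * Bc m j * (j:ℂ)^i := by rw [repG m i]
        _ = ∑ j ∈ range (m+2), (-1:ℂ)^i * ((-1:ℂ)^j * Bc m j * (j:ℂ)^i) := Finset.mul_sum _ _ _
        _ = ∑ j ∈ range (m+2), (-1:ℂ)^j * Bc m j * (-(j:ℂ))^i := by
            apply Finset.sum_congr rfl
            intro j _
            rw [neg_pow (j:ℂ) i]
            ring
    have e1 : ∀ i' ∈ range (i+1), (2:ℂ)^m * ((i.choose i' : ℂ) * ((-1:ℂ)^i' * Gs m i'))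
        = ∑ j ∈ range (m+2), ((i.choose i' : ℂ) * (-1:ℂ)^i') * ((-1:ℂ)^j * Bc m j * (j:ℂ)^i') := by
      intro i' _
      calc (2:ℂ)^m * ((i.choose i' : ℂ) * ((-1:ℂ)^i' * Gs m i'))
          = ((i.choose i' : ℂ) * (-1:ℂ)^i') * ((2:ℂ)^m * Gs m i') := by ring
        _ = ((i.choose i' : ℂ) * (-1:ℂ)^i') * ∑ j ∈ range (m+2), (-1:ℂ)^j * Bc m j * (j:ℂ)^i' := by
            rw [repG m i']
        _ = _ := Finset.mul_sum _ _ _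
    rw [e0, Finset.sum_congr rfl e1, Finset.sum_comm]
    have e2 : ∀ j ∈ range (m+2),
        ∑ i' ∈ range (i+1), ((i.choose i' : ℂ) * (-1:ℂ)^i') * ((-1:ℂ)^j * Bc m j * (j:ℂ)^i')
        = (-1:ℂ)^j * Bc m j * (1-(j:ℂ))^i := by
      intro j _
      rw [show (1-(j:ℂ))^i = ((-(j:ℂ))+1)^i from by ring_nf, add_pow (-(j:ℂ)) 1 i,
        Finset.mul_sum]
      apply Finset.sum_congr rfl
      intro i' _
      rw [one_pow, neg_pow (j:ℂ) i']
      ring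
    rw [Finset.sum_congr rfl e2, ← Finset.sum_add_distrib]
    have : ∀ j ∈ range (m+2),
        (-1:ℂ)^j * Bc m j * (-(j:ℂ))^i + (-1:ℂ)^j * Bc m j * (1-(j:ℂ))^i
        = (-1:ℂ)^j * Bc m j * ((-(j:ℂ))^i + (1-(j:ℂ))^i) := by
      intro j _; ring
    rw [Finset.sum_congr rfl this, R2B m i hi him]
    ring
  exact mul_left_cancel₀ h2m key

lemma Gs_zero (m : ℕ) : Gs m 0 = 1 := by
  unfold Gs
  rw [Finset.sum_congr rfl (fun k _ => term_eq 0 k)]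
  rw [Finset.sum_eq_single 0]
  · norm_num
  · intro k _ hk0
    have hk : 0 < k := Nat.pos_of_ne_zero hk0
    have := alt_pow 0 k 0 hk
    have hcong : ∀ j ∈ range (k+1), (-1:ℂ)^j * (k.choose j : ℂ) * ((0:ℂ)+(j:ℂ))^0
        = (-1:ℂ)^j * (k.choose j : ℂ) * (j:ℂ)^0 := by
      intro j _; rw [pow_zero, pow_zero]
    rw [Finset.sum_congr rfl hcong] at this
    rw [this, zero_div]
  · intro h
    exact absurd (Finset.mem_range.mpr (by omega)) h

/-- With `g_m = Σ_{k=0}^{m} S(m,k)·(-1)^k·k!/2^k`, one has `g_m = 0` for every positive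
even `m` (the egf of `(g_m)` is `(1-eᵗ)/(1+eᵗ)`, an odd function of `t`). -/
theorem stirling_even_sum_vanishes (m : ℕ) (hm : 0 < m) (hme : Even m) :
    ∑ k ∈ Finset.range (m + 1),
        stirling2 m k * (-1 : ℂ) ^ k * (Nat.factorial k : ℂ) / 2 ^ k = 0 := by
  have hH : ∀ i, 1 ≤ i → i ≤ m →
      (1+(-1:ℂ)^i) * Gs m i
        + ∑ i' ∈ range (i+1), (i.choose i' : ℂ) * ((1+(-1:ℂ)^i') * Gs m i') = 2 := by
    intro i h1 h2
    have a := GR1 m i h1 h2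
    have b := GR2 m i h1 h2
    have hsplit : ∑ i' ∈ range (i+1), (i.choose i' : ℂ) * ((1+(-1:ℂ)^i') * Gs m i')
        = (∑ i' ∈ range (i+1), (i.choose i' : ℂ) * Gs m i')
          + ∑ i' ∈ range (i+1), (i.choose i' : ℂ) * ((-1:ℂ)^i' * Gs m i') := by
      rw [← Finset.sum_add_distrib]; apply Finset.sum_congr rfl; intro i' _; ring
    rw [hsplit]
    linear_combination a + b
  have hval : ∀ i, i ≤ m → (1+(-1:ℂ)^i) * Gs m i = if i = 0 then 2 else 0 := by
    intro i
    induction i using Nat.strong_induction_on with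
    | _ i IH =>
    intro him
    rcases Nat.eq_zero_or_pos i with rfl | hi
    · rw [Gs_zero m]; norm_num
    · have h := hH i hi him
      rw [Finset.sum_range_succ] at h
      have hs : ∑ i' ∈ range i, (i.choose i' : ℂ) * ((1+(-1:ℂ)^i') * Gs m i') = 2 := by
        have e : ∀ i' ∈ range i, (i.choose i' : ℂ) * ((1+(-1:ℂ)^i') * Gs m i')
            = (i.choose i' : ℂ) * (if i' = 0 then 2 else 0) := by
          intro i' hi'
          have hlt := Finset.mem_range.mp hi'
          rw [IH i' hlt (by omega)]
        rw [Finset.sum_congr rfl e, Finset.sum_eq_single 0]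
        · simp
        · intro b _ hb; simp [hb]
        · intro h0; exact absurd (Finset.mem_range.mpr hi) h0
      have hii : ((i.choose i : ℕ) : ℂ) = 1 := by rw [Nat.choose_self]; norm_num
      rw [if_neg (by omega : ¬ i = 0)]
      linear_combination (1/2:ℂ)*h - (1/2:ℂ)*hs
        - ((1+(-1:ℂ)^i) * Gs m i / 2) * hii
  have h0 := hval m (le_refl m)
  rw [if_neg (by omega), hme.neg_one_pow] at h0
  show Gs m m = 0
  linear_combination h0 / 2
end
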